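/- Let λ > 0 and m a positive integer. Let ν be a probability distribution on ℝ with finite absolute m-th moment and write m_ℓ = ∫ x^ℓ dν(x) for ℓ ≤ m. Suppose that for each integer s ≥ λ we are given, on some probability space, mutually independent random variables B_1^{(s)}, …, B_s^{(s)}, ε_1^{(s)}, …, ε_s^{(s)}, X_1^{(s)}, …, X_s^{(s)}, where each B_j^{(s)} is Bernoulli with P(B_j^{(s)} = 1) = λ/s, each ε_j^{(s)} is uniform on {−1, 1}, and each X_j^{(s)} has distribution ν. Then lim_{s→∞} E[ ( Σ_{j=1}^s B_j^{(s)} ε_j^{(s)} X_j^{(s)} )^m ] = Σ_{σ ∈ Π_e(m)} λ^{|σ|} · Π_{k=1}^{|σ|} m_{|σ_k|}, where the sum runs over all even partitions σ of {1, …, m} with blocks σ_1, …, σ_{|σ|}. -/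

import Mathlib

open MeasureTheory ProbabilityTheory Real BigOperators Filter

/-- `P` is (the set of blocks of) a partition of `{1, …, m}` (i.e. of `Fin m`): all blocks are
nonempty, pairwise disjoint, and cover everything. -/
def IsPartitionFinset (m : ℕ) (P : Finset (Finset (Fin m))) : Prop :=
  (∀ b ∈ P, b.Nonempty) ∧
  (∀ b ∈ P, ∀ b' ∈ P, b ≠ b' → Disjoint b b') ∧
  (∀ i : Fin m, ∃ b ∈ P, i ∈ b)

instance (m : ℕ) (P : Finset (Finset (Fin m))) : Decidable (IsPartitionFinset m P) := by
  unfold IsPartitionFinset; infer_instance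

/-!
Expanding the power, `E[(∑ⱼ Bⱼ εⱼ Xⱼ)^m]` is a sum over maps `f : {1,…,m} → {1,…,s}`. By
independence each term factors over the fibres of `f`, a fibre of size `k` contributing
`E[B^k] E[ε^k] E[X^k]`, so the term only depends on the partition `ker f`, which is the kernel
of exactly `s (s-1) ⋯ (s-|σ|+1)` maps. That contribution vanishes for odd `k` and equals
`(λ/s) m_k` for even `k > 0`; hence only even partitions survive, with weight
`s (s-1) ⋯ (s-|σ|+1) (λ/s)^{|σ|} → λ^{|σ|}`.
-/

open Finset Function

section Partitions

variable {m : ℕ} {γ : Type*} [DecidableEq γ]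

def fiberPartition (f : Fin m → γ) : Finset (Finset (Fin m)) :=
  univ.image fun i => ({j | f j = f i} : Finset (Fin m))

lemma isPartitionFinset_fiberPartition (f : Fin m → γ) :
    IsPartitionFinset m (fiberPartition f) := by
  simp only [IsPartitionFinset, fiberPartition, mem_image, mem_univ, true_and,
    forall_exists_index, forall_apply_eq_imp_iff]
  refine ⟨fun i => ⟨i, by simp⟩, fun i i' hne => ?_, fun i => ⟨_, ⟨i, rfl⟩, by simp⟩⟩
  rw [disjoint_left]
  intro j hj hj'
  simp only [mem_filter, mem_univ, true_and] at hj hj'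
  exact hne (by rw [← hj, ← hj'])

namespace IsPartitionFinset

variable {P : Finset (Finset (Fin m))} (hP : IsPartitionFinset m P)

noncomputable def block (i : Fin m) : P :=
  ⟨(hP.2.2 i).choose, (hP.2.2 i).choose_spec.1⟩

lemma mem_block (i : Fin m) : i ∈ (hP.block i : Finset (Fin m)) :=
  (hP.2.2 i).choose_spec.2

lemma eq_block {b : Finset (Fin m)} {i : Fin m} (hb : b ∈ P) (hi : i ∈ b) :
    b = hP.block i := by
  by_contra hne
  exact disjoint_left.mp (hP.2.1 _ hb _ (hP.block i).2 hne) hi (hP.mem_block i)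

lemma block_surjective : Surjective hP.block := fun b =>
  let ⟨i, hi⟩ := hP.1 b b.2
  ⟨i, Subtype.ext (hP.eq_block b.2 hi).symm⟩

lemma mem_block_iff {i j : Fin m} :
    j ∈ (hP.block i : Finset (Fin m)) ↔ hP.block j = hP.block i :=
  ⟨fun h => Subtype.ext (hP.eq_block (hP.block i).2 h).symm, fun h => h ▸ hP.mem_block j⟩

lemma fiberPartition_eq_iff (f : Fin m → γ) :
    fiberPartition f = P ↔ ∀ i j, f j = f i ↔ hP.block j = hP.block i := by
  constructor
  · rintro rfl i j
    have hfib : ({j | f j = f i} : Finset (Fin m)) = hP.block i :=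
      hP.eq_block (mem_image_of_mem _ (mem_univ i)) (by simp)
    rw [← hP.mem_block_iff, ← hfib]
    simp
  · intro hf
    have hfib : ∀ i, ({j | f j = f i} : Finset (Fin m)) = hP.block i := fun i => by
      ext j; rw [hP.mem_block_iff]; simp [hf]
    ext b
    simp only [fiberPartition, hfib, mem_image, mem_univ, true_and]
    exact ⟨by rintro ⟨i, rfl⟩; exact (hP.block i).2,
      fun hb => (hP.block_surjective ⟨b, hb⟩).imp fun i hi => by rw [hi]⟩

end IsPartitionFinset

lemma card_filter_ker_eq_descFactorial {α β : Type*} [Fintype α] [DecidableEq α] [Fintype β]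
    [DecidableEq β] [Fintype γ] (q : α → β) (hq : Surjective q) :
    #{f : α → γ | ∀ i j, f j = f i ↔ q j = q i}
      = (Fintype.card γ).descFactorial (Fintype.card β) := by
  rw [← Fintype.card_embedding_eq, ← card_univ]
  symm
  refine card_nbij (fun g => g ∘ q) (fun g _ => ?_) (fun g _ g' _ h => ?_) (fun f hf => ?_)
  · simp [g.injective.eq_iff]
  · exact DFunLike.coe_injective (hq.injective_comp_right h)
  · have hf : ∀ i j, f j = f i ↔ q j = q i := by simpa using hf
    refine ⟨⟨f ∘ surjInv hq, fun a b h => ?_⟩, mem_univ _, funext fun i => ?_⟩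
    · simpa [surjInv_eq] using (hf _ _).1 h
    · exact (hf _ _).2 (surjInv_eq hq _)

lemma card_filter_fiberPartition_eq [Fintype γ] {P : Finset (Finset (Fin m))}
    (hP : IsPartitionFinset m P) :
    #{f : Fin m → γ | fiberPartition f = P} = (Fintype.card γ).descFactorial #P := by
  rw [← Fintype.card_coe P, ← card_filter_ker_eq_descFactorial _ hP.block_surjective]
  congr 1
  ext f
  simpa using hP.fiberPartition_eq_iff f

lemma prod_card_fiber_eq_prod_fiberPartition [Fintype γ] {M : Type*} [CommMonoid M]
    (g : ℕ → M) (hg : g 0 = 1) (f : Fin m → γ) :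
    ∏ c, g #{i | f i = c} = ∏ b ∈ fiberPartition f, g #b := by
  have hker :
      fiberPartition f = (univ.image f).image fun c => ({i | f i = c} : Finset (Fin m)) := by
    rw [image_image]; rfl
  rw [hker, prod_image fun c hc c' _ h => ?_]
  · refine (prod_subset (subset_univ _) fun c _ hc => ?_).symm
    rw [← hg]
    congr
    simpa [filter_eq_empty_iff] using hc
  · obtain ⟨i, -, rfl⟩ := mem_image.1 hc
    simpa using (Finset.ext_iff.1 h i).1

lemma sum_prod_card_fiber_eq_sum_partitions [Fintype γ] {R : Type*} [CommSemiring R]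
    (g : ℕ → R) (hg : g 0 = 1) :
    ∑ f : Fin m → γ, ∏ c, g #{i | f i = c}
      = ∑ P with IsPartitionFinset m P, (Fintype.card γ).descFactorial #P * ∏ b ∈ P, g #b := by
  rw [← sum_fiberwise_of_maps_to (g := fiberPartition)
    fun f _ => mem_filter.2 ⟨mem_univ _, isPartitionFinset_fiberPartition f⟩]
  refine sum_congr rfl fun P hP => ?_
  rw [sum_congr rfl fun f hf => by
    rw [prod_card_fiber_eq_prod_fiberPartition g hg, (mem_filter.1 hf).2],
    sum_const, card_filter_fiberPartition_eq (mem_filter.1 hP).2, nsmul_eq_mul]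

end Partitions

lemma prod_comp_eq_prod_pow_card_fiber {α γ M : Type*} [Fintype α] [Fintype γ] [DecidableEq γ]
    [CommMonoid M] (h : γ → M) (f : α → γ) :
    ∏ i, h (f i) = ∏ c, h c ^ #{i | f i = c} := by
  rw [← prod_fiberwise univ f]
  refine prod_congr rfl fun c _ => ?_
  rw [prod_congr rfl fun i hi => by rw [(mem_filter.1 hi).2], prod_const]

section Probability

variable {Ω : Type*} [MeasurableSpace Ω] {μ : Measure Ω}

lemma ProbabilityTheory.iIndepFun.integrable_fun_prod {ι : Type*} [Fintype ι] {X : ι → Ω → ℝ}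
    (hX : iIndepFun X μ) (mX : ∀ i, AEMeasurable (X i) μ) (hint : ∀ i, Integrable (X i) μ) :
    Integrable (fun ω => ∏ i, X i ω) μ := by
  have := hX.isProbabilityMeasure
  have : ∀ i, IsProbabilityMeasure (μ.map (X i)) := fun i => Measure.isProbabilityMeasure_map (mX i)
  have hpi : Integrable (fun x : ι → ℝ => ∏ i, x i) (μ.map fun ω i => X i ω) := by
    rw [hX.map_fun_eq_pi_map mX]
    exact Integrable.fintype_prod fun i =>
      (integrable_map_measure aestronglyMeasurable_id (mX i)).2 (hint i)
  exact hpi.comp_aemeasurable (aemeasurable_pi_lambda _ mX)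

lemma integral_sum_mul_mul_pow_eq [IsProbabilityMeasure μ] {γ : Type*} [Fintype γ] [DecidableEq γ]
    (B e X : γ → Ω → ℝ) (hmeas : ∀ t, Measurable (Sum.elim B (Sum.elim e X) t))
    (hindep : iIndepFun (Sum.elim B (Sum.elim e X)) μ) (m : ℕ)
    (hint : ∀ t, ∀ k ≤ m, Integrable (fun ω => Sum.elim B (Sum.elim e X) t ω ^ k) μ) :
    ∫ ω, (∑ c, B c ω * e c ω * X c ω) ^ m ∂μ
      = ∑ f : Fin m → γ, ∏ c, (∫ ω, B c ω ^ #{i | f i = c} ∂μ)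
          * (∫ ω, e c ω ^ #{i | f i = c} ∂μ) * ∫ ω, X c ω ^ #{i | f i = c} ∂μ := by
  set W := Sum.elim B (Sum.elim e X)
  have hterm : ∀ f : Fin m → γ,
      Integrable (fun ω => ∏ i, B (f i) ω * e (f i) ω * X (f i) ω) μ ∧
      ∫ ω, ∏ i, B (f i) ω * e (f i) ω * X (f i) ω ∂μ
        = ∏ c, (∫ ω, B c ω ^ #{i | f i = c} ∂μ)
          * (∫ ω, e c ω ^ #{i | f i = c} ∂μ) * ∫ ω, X c ω ^ #{i | f i = c} ∂μ := by
    intro f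
    let kf : γ → ℕ := fun c => #{i | f i = c}
    let k : γ ⊕ γ ⊕ γ → ℕ := Sum.elim kf (Sum.elim kf kf)
    have hkf : ∀ c, kf c ≤ m := fun c => (card_filter_le _ _).trans_eq (card_fin m)
    have hk : ∀ t, k t ≤ m := by
      rintro (c | c | c) <;> exact hkf c
    have hpow : ∀ ω, ∏ i, B (f i) ω * e (f i) ω * X (f i) ω = ∏ t, W t ω ^ k t := fun ω => by
      simp only [prod_mul_distrib, prod_comp_eq_prod_pow_card_fiber (fun c => B c ω),
        prod_comp_eq_prod_pow_card_fiber (fun c => e c ω),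
        prod_comp_eq_prod_pow_card_fiber (fun c => X c ω), Fintype.prod_sum_type, mul_assoc]
      rfl
    have hV : iIndepFun (fun t ω => W t ω ^ k t) μ :=
      hindep.comp (fun t x => x ^ k t) fun t => measurable_id.pow_const _
    simp_rw [hpow]
    refine ⟨hV.integrable_fun_prod (fun t => ((hmeas t).pow_const _).aemeasurable)
      fun t => hint t _ (hk t), ?_⟩
    rw [hV.integral_fun_prod_eq_prod_integral fun t => ((hmeas t).pow_const _).aestronglyMeasurable,
      Fintype.prod_sum_type, Fintype.prod_sum_type, ← prod_mul_distrib, ← prod_mul_distrib]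
    simp only [mul_assoc]
    rfl
  simp_rw [Fintype.sum_pow]
  rw [integral_finsetSum _ fun f _ => (hterm f).1]
  exact sum_congr rfl fun f _ => (hterm f).2

variable {Y : Ω → ℝ} {a b : ENNReal} {x y : ℝ}

lemma integrable_add_dirac (ha : a ≠ ⊤) (hb : b ≠ ⊤) (g : ℝ → ℝ) :
    Integrable g (a • Measure.dirac x + b • Measure.dirac y) :=
  ((integrable_dirac enorm_lt_top).smul_measure ha).add_measure
    ((integrable_dirac enorm_lt_top).smul_measure hb)

lemma integrable_comp_of_map_eq_add_dirac (hY : AEMeasurable Y μ)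
    (h : μ.map Y = a • Measure.dirac x + b • Measure.dirac y) (ha : a ≠ ⊤) (hb : b ≠ ⊤)
    (g : ℝ → ℝ) : Integrable (fun ω => g (Y ω)) μ :=
  (h ▸ integrable_add_dirac ha hb g).comp_aemeasurable hY

lemma integral_comp_of_map_eq_add_dirac (hY : AEMeasurable Y μ)
    (h : μ.map Y = a • Measure.dirac x + b • Measure.dirac y) (ha : a ≠ ⊤) (hb : b ≠ ⊤)
    (g : ℝ → ℝ) : ∫ ω, g (Y ω) ∂μ = a.toReal * g x + b.toReal * g y := by
  have hg := integrable_add_dirac (x := x) (y := y) ha hb g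
  rw [← integral_map hY (h ▸ hg.aestronglyMeasurable), h, integral_add_measure
    ((integrable_dirac enorm_lt_top).smul_measure ha)
    ((integrable_dirac enorm_lt_top).smul_measure hb), integral_smul_measure,
    integral_smul_measure, integral_dirac, integral_dirac, smul_eq_mul, smul_eq_mul]

end Probability

/-- `E[(B ε X)^k]` for independent `B ∼ Bernoulli(p)`, Rademacher `ε` and `X ∼ ν`. -/
noncomputable def thinnedMoment (p : ℝ) (ν : Measure ℝ) (k : ℕ) : ℝ :=
  ((1 - p) * 0 ^ k + p) * (((-1) ^ k + 1) / 2) * ∫ x, x ^ k ∂ν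

section ThinnedMoment

variable (p : ℝ) (ν : Measure ℝ)

lemma thinnedMoment_zero [IsProbabilityMeasure ν] : thinnedMoment p ν 0 = 1 := by
  simp [thinnedMoment]

lemma thinnedMoment_of_odd {k : ℕ} (hk : Odd k) : thinnedMoment p ν k = 0 := by
  simp [thinnedMoment, hk.neg_one_pow]

lemma thinnedMoment_of_even {k : ℕ} (hk : Even k) (hk0 : k ≠ 0) :
    thinnedMoment p ν k = p * ∫ x, x ^ k ∂ν := by
  simp [thinnedMoment, hk.neg_one_pow, hk0]

lemma prod_thinnedMoment {α : Type*} {P : Finset (Finset α)} (hP : ∀ b ∈ P, b.Nonempty) :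
    ∏ b ∈ P, thinnedMoment p ν #b
      = if ∀ b ∈ P, Even #b then p ^ #P * ∏ b ∈ P, ∫ x, x ^ #b ∂ν else 0 := by
  split_ifs with heven
  · rw [prod_congr rfl fun b hb => thinnedMoment_of_even p ν (heven b hb) (hP b hb).card_ne_zero,
      prod_mul_distrib, prod_const]
  · obtain ⟨b, hb, hodd⟩ := not_forall₂.1 heven
    exact prod_eq_zero hb (thinnedMoment_of_odd p ν (Nat.not_even_iff_odd.1 hodd))

end ThinnedMoment

lemma integrable_pow_of_integrable_abs_pow {ν : Measure ℝ} [IsFiniteMeasure ν] {m k : ℕ}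
    (hmom : Integrable (fun x => |x| ^ m) ν) (hk : k ≤ m) : Integrable (fun x : ℝ => x ^ k) ν := by
  have habs : Integrable (fun x : ℝ => ‖x‖ ^ k) ν :=
    integrable_norm_pow_of_le aestronglyMeasurable_id hk hmom
  exact (integrable_norm_iff (by fun_prop)).1 (by simpa using habs)

lemma integral_sum_pow_eq_sum_evenPartitions {Ω : Type*} [MeasurableSpace Ω] {μ : Measure Ω}
    [IsProbabilityMeasure μ] {γ : Type*} [Fintype γ] [DecidableEq γ]
    {ν : Measure ℝ} [IsProbabilityMeasure ν] {m : ℕ} (hmom : Integrable (fun x => |x| ^ m) ν)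
    {p : ℝ} (hp0 : 0 ≤ p) (hp1 : p ≤ 1) (B e X : γ → Ω → ℝ)
    (hBmeas : ∀ c, Measurable (B c)) (hemeas : ∀ c, Measurable (e c))
    (hXmeas : ∀ c, Measurable (X c)) (hindep : iIndepFun (Sum.elim B (Sum.elim e X)) μ)
    (hB : ∀ c, μ.map (B c)
      = ENNReal.ofReal (1 - p) • Measure.dirac (0 : ℝ) + ENNReal.ofReal p • Measure.dirac 1)
    (he : ∀ c, μ.map (e c)
      = (2 : ENNReal)⁻¹ • Measure.dirac (-1 : ℝ) + (2 : ENNReal)⁻¹ • Measure.dirac 1)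
    (hX : ∀ c, μ.map (X c) = ν) :
    ∫ ω, (∑ c, B c ω * e c ω * X c ω) ^ m ∂μ
      = ∑ P with IsPartitionFinset m P ∧ ∀ b ∈ P, Even #b,
          (Fintype.card γ).descFactorial #P * p ^ #P * ∏ b ∈ P, ∫ x, x ^ #b ∂ν := by
  have hmeas : ∀ t, Measurable (Sum.elim B (Sum.elim e X) t) := by
    rintro (c | c | c)
    exacts [hBmeas c, hemeas c, hXmeas c]
  have hint : ∀ t, ∀ k ≤ m, Integrable (fun ω => Sum.elim B (Sum.elim e X) t ω ^ k) μ := by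
    rintro (c | c | c) k hk
    · exact integrable_comp_of_map_eq_add_dirac (hBmeas c).aemeasurable (hB c)
        ENNReal.ofReal_ne_top ENNReal.ofReal_ne_top (· ^ k)
    · exact integrable_comp_of_map_eq_add_dirac (hemeas c).aemeasurable (he c)
        (by simp) (by simp) (· ^ k)
    · have hXk : Integrable (fun x : ℝ => x ^ k) (μ.map (X c)) := by
        rw [hX c]; exact integrable_pow_of_integrable_abs_pow hmom hk
      exact hXk.comp_aemeasurable (hXmeas c).aemeasurable
  have hmoment : ∀ c k, (∫ ω, B c ω ^ k ∂μ) * (∫ ω, e c ω ^ k ∂μ) * ∫ ω, X c ω ^ k ∂μ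
      = thinnedMoment p ν k := by
    intro c k
    rw [integral_comp_of_map_eq_add_dirac (hBmeas c).aemeasurable (hB c)
        ENNReal.ofReal_ne_top ENNReal.ofReal_ne_top (· ^ k),
      integral_comp_of_map_eq_add_dirac (hemeas c).aemeasurable (he c) (by simp) (by simp) (· ^ k),
      ← integral_map (f := fun x : ℝ => x ^ k) (hXmeas c).aemeasurable (by fun_prop), hX c,
      ENNReal.toReal_ofReal (sub_nonneg.2 hp1), ENNReal.toReal_ofReal hp0, thinnedMoment]
    simp only [one_pow, ENNReal.toReal_inv, ENNReal.toReal_ofNat]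
    ring
  rw [integral_sum_mul_mul_pow_eq B e X hmeas hindep m hint]
  simp_rw [hmoment]
  rw [sum_prod_card_fiber_eq_sum_partitions _ (thinnedMoment_zero p ν), ← filter_filter,
    sum_filter (s := filter (IsPartitionFinset m) univ)]
  refine sum_congr rfl fun P hP => ?_
  rw [prod_thinnedMoment p ν (mem_filter.1 hP).2.1]
  split_ifs <;> ring

lemma tendsto_descFactorial_mul_div_pow (lam : ℝ) (k : ℕ) :
    Tendsto (fun s : ℕ => s.descFactorial k * (lam / s) ^ k) atTop (nhds (lam ^ k)) := by
  have hpow : Tendsto (fun s : ℕ => (s : ℝ) ^ k * (lam / s) ^ k) atTop (nhds (lam ^ k)) := by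
    refine tendsto_const_nhds.congr' ?_
    filter_upwards [eventually_ne_atTop 0] with s hs
    rw [← mul_pow, mul_div_cancel₀ _ (Nat.cast_ne_zero.2 hs)]
  exact ((isEquivalent_descFactorial k).symm.mul Asymptotics.IsEquivalent.refl).tendsto_nhds hpow

theorem stmt_5_general (lam : ℝ) (hlam : 0 < lam) (m : ℕ)
    (ν : Measure ℝ) [IsProbabilityMeasure ν]
    (hmom : Integrable (fun x => |x| ^ m) ν)
    (Ω : ℕ → Type) (mΩ : ∀ s, MeasurableSpace (Ω s)) (μ : ∀ s, Measure (Ω s))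
    (hprob : ∀ s, IsProbabilityMeasure (μ s))
    (B e X : ∀ s : ℕ, Fin s → Ω s → ℝ)
    (hBmeas : ∀ s j, Measurable (B s j)) (hemeas : ∀ s j, Measurable (e s j))
    (hXmeas : ∀ s j, Measurable (X s j))
    (hindep : ∀ s : ℕ, lam ≤ (s : ℝ) →
      iIndepFun (Sum.elim (B s) (Sum.elim (e s) (X s))) (μ s))
    (hB : ∀ s : ℕ, lam ≤ (s : ℝ) → ∀ j, Measure.map (B s j) (μ s)
      = ENNReal.ofReal (1 - lam / s) • Measure.dirac (0 : ℝ)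
        + ENNReal.ofReal (lam / s) • Measure.dirac (1 : ℝ))
    (he : ∀ s : ℕ, lam ≤ (s : ℝ) → ∀ j, Measure.map (e s j) (μ s)
      = (2 : ENNReal)⁻¹ • Measure.dirac (-1 : ℝ) + (2 : ENNReal)⁻¹ • Measure.dirac (1 : ℝ))
    (hX : ∀ s : ℕ, lam ≤ (s : ℝ) → ∀ j, Measure.map (X s j) (μ s) = ν) :
    Tendsto (fun s : ℕ => ∫ ω, (∑ j, B s j ω * e s j ω * X s j ω) ^ m ∂(μ s)) atTop
      (nhds (∑ P ∈ Finset.univ.filter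
          (fun P : Finset (Finset (Fin m)) =>
            IsPartitionFinset m P ∧ ∀ b ∈ P, Even b.card),
          lam ^ P.card * ∏ b ∈ P, ∫ x, x ^ b.card ∂ν)) := by
  have hmoment : ∀ᶠ s : ℕ in atTop,
      ∑ P with IsPartitionFinset m P ∧ ∀ b ∈ P, Even #b,
          s.descFactorial #P * (lam / s) ^ #P * ∏ b ∈ P, ∫ x, x ^ #b ∂ν
        = ∫ ω, (∑ j, B s j ω * e s j ω * X s j ω) ^ m ∂(μ s) := by
    filter_upwards [eventually_ge_atTop ⌈lam⌉₊] with s hs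
    have hls : lam ≤ s := Nat.ceil_le.1 hs
    have := hprob s
    rw [integral_sum_pow_eq_sum_evenPartitions hmom (div_nonneg hlam.le (hlam.trans_le hls).le)
      ((div_le_one (hlam.trans_le hls)).2 hls) (B s) (e s) (X s) (hBmeas s) (hemeas s) (hXmeas s)
      (hindep s hls) (hB s hls) (he s hls) (hX s hls), Fintype.card_fin]
  refine Tendsto.congr' hmoment (tendsto_finsetSum _ fun P _ => ?_)
  exact (tendsto_descFactorial_mul_div_pow lam #P).mul_const _

/-- **Algebraic central limit step in the proof of Theorem 4.8 of the paper** (scalar,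
commutative instance): if for every `s ≥ λ` the random variables
`B₁⁽ˢ⁾, …, B_s⁽ˢ⁾, ε₁⁽ˢ⁾, …, ε_s⁽ˢ⁾, X₁⁽ˢ⁾, …, X_s⁽ˢ⁾` are mutually independent with `B_j⁽ˢ⁾`
Bernoulli of parameter `λ/s`, `ε_j⁽ˢ⁾` uniform on `{-1, 1}` and `X_j⁽ˢ⁾` distributed as `ν`,
then `E[(Σ_j B_j⁽ˢ⁾ ε_j⁽ˢ⁾ X_j⁽ˢ⁾)^m] → Σ_{σ even partition of {1,…,m}} λ^{|σ|} Π_k m_{|σ_k|}`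
as `s → ∞`, where `m_ℓ = ∫ x^ℓ dν`. -/
theorem stmt_5 (lam : ℝ) (hlam : 0 < lam) (m : ℕ) (hm : 0 < m)
    (ν : Measure ℝ) [IsProbabilityMeasure ν]
    (hmom : Integrable (fun x => |x| ^ m) ν)
    (Ω : ℕ → Type) (mΩ : ∀ s, MeasurableSpace (Ω s)) (μ : ∀ s, Measure (Ω s))
    (hprob : ∀ s, IsProbabilityMeasure (μ s))
    (B e X : ∀ s : ℕ, Fin s → Ω s → ℝ)
    (hBmeas : ∀ s j, Measurable (B s j)) (hemeas : ∀ s j, Measurable (e s j))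
    (hXmeas : ∀ s j, Measurable (X s j))
    (hindep : ∀ s : ℕ, lam ≤ (s : ℝ) →
      iIndepFun (Sum.elim (B s) (Sum.elim (e s) (X s))) (μ s))
    (hB : ∀ s : ℕ, lam ≤ (s : ℝ) → ∀ j, Measure.map (B s j) (μ s)
      = ENNReal.ofReal (1 - lam / s) • Measure.dirac (0 : ℝ)
        + ENNReal.ofReal (lam / s) • Measure.dirac (1 : ℝ))
    (he : ∀ s : ℕ, lam ≤ (s : ℝ) → ∀ j, Measure.map (e s j) (μ s)
      = (2 : ENNReal)⁻¹ • Measure.dirac (-1 : ℝ) + (2 : ENNReal)⁻¹ • Measure.dirac (1 : ℝ))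
    (hX : ∀ s : ℕ, lam ≤ (s : ℝ) → ∀ j, Measure.map (X s j) (μ s) = ν) :
    Tendsto (fun s : ℕ => ∫ ω, (∑ j, B s j ω * e s j ω * X s j ω) ^ m ∂(μ s)) atTop
      (nhds (∑ P ∈ Finset.univ.filter
          (fun P : Finset (Finset (Fin m)) =>
            IsPartitionFinset m P ∧ ∀ b ∈ P, Even b.card),
          lam ^ P.card * ∏ b ∈ P, ∫ x, x ^ b.card ∂ν)) :=
  stmt_5_general lam hlam m ν hmom Ω mΩ μ hprob B e X hBmeas hemeas hXmeas hindep hB he hX
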